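/- arXiv:1909.03914 — 3 statements merged into one kernel-verified Lean document; each statement's English description precedes it below -/
import Mathlib

section
/- Let V be a vector space over a field of characteristic zero and n > 1. The reduced comultiplication Sym^n V → ⊕_{a+b=n, a,b>0} Sym^a V ⊗ Sym^b V, induced by the comultiplication of the symmetric coalgebra (sending a product u₁⋯u_n to the sum over proper nonempty subsets S of {1,…,n} of (∏_{i∈S} u_i) ⊗ (∏_{i∉S} u_i)), is injective. -/
/-!
Evaluating the first tensor factor at `Xᵢ ↦ c • Xᵢ` and multiplying out turns `Δ` into the
substitution `Xᵢ ↦ (c + 1) • Xᵢ`. If `Δ p = q ⊗ 1 + 1 ⊗ r` with `p, q, r` homogeneous of degree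
`n`, this gives `(c + 1)ⁿ p = cⁿ q + r` for every scalar `c`. Both sides are polynomials in `c`,
and comparing the coefficients of `c` gives `n p = 0`, since `n > 1`.
-/

open scoped TensorProduct

/-- The comultiplication of the symmetric (co)algebra, modelled on the polynomial algebra:
the algebra map determined by `Xᵢ ↦ Xᵢ ⊗ 1 + 1 ⊗ Xᵢ`. -/
noncomputable def symComul (K : Type*) [CommRing K] (σ : Type*) :
    MvPolynomial σ K →ₐ[K] MvPolynomial σ K ⊗[K] MvPolynomial σ K :=
  MvPolynomial.aeval fun i => MvPolynomial.X i ⊗ₜ[K] 1 + 1 ⊗ₜ[K] MvPolynomial.X i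

theorem eq_zero_of_forall_add_one_pow_smul_eq {K V : Type*} [Field K] [CharZero K]
    [AddCommGroup V] [Module K V] {n : ℕ} (hn : 1 < n) {x y z : V}
    (h : ∀ c : K, (c + 1) ^ n • x = c ^ n • y + z) : x = 0 := by
  open Polynomial in
  rw [← Module.forall_dual_apply_eq_zero_iff K x]
  intro φ
  have hP : (X + 1) ^ n * C (φ x) - X ^ n * C (φ y) - C (φ z) = 0 :=
    Polynomial.funext fun c => by
      have hc := congr(φ $(h c))
      simp only [map_add, map_smul, smul_eq_mul] at hc
      simp only [eval_sub, eval_mul, eval_pow, eval_add, eval_X, eval_one, eval_C, eval_zero]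
      linear_combination hc
  have hcoeff_one : (n : K) * φ x = 0 := by
    simpa [coeff_X_add_one_pow, coeff_X_pow, hn.ne] using congr(coeff $hP 1)
  exact (mul_eq_zero.mp hcoeff_one).resolve_left (Nat.cast_ne_zero.mpr (by omega))

theorem MvPolynomial.IsHomogeneous.aeval_smul {K A σ : Type*} [CommSemiring K] [CommSemiring A]
    [Algebra K A] {n : ℕ} {p : MvPolynomial σ K} (hp : p.IsHomogeneous n) (c : K) (f : σ → A) :
    MvPolynomial.aeval (c • f) p = c ^ n • MvPolynomial.aeval f p := by
  conv_lhs => rw [p.as_sum]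
  conv_rhs => rw [p.as_sum]
  simp only [map_sum, Finset.smul_sum, MvPolynomial.aeval_monomial, Finsupp.prod, Pi.smul_apply,
    smul_pow]
  refine Finset.sum_congr rfl fun m hm => ?_
  rw [Finset.prod_smul, Finset.prod_pow_eq_pow_sum, ← hp.degree_eq_sum_deg_support hm,
    mul_smul_comm]

theorem productMap_comp_symComul {K σ A : Type*} [CommRing K] [CommSemiring A] [Algebra K A]
    (f g : MvPolynomial σ K →ₐ[K] A) :
    (Algebra.TensorProduct.productMap f g).comp (symComul K σ) =
      MvPolynomial.aeval fun i => f (MvPolynomial.X i) + g (MvPolynomial.X i) := by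
  ext i
  simp [symComul]

theorem TensorProduct.exists_eq_tmul_add_tmul_of_mem_span {K M : Type*} [CommSemiring K]
    [AddCommMonoid M] [Module K M] {N : Submodule K M} {a b : M} {z : M ⊗[K] M}
    (h : z ∈ Submodule.span K ({w | ∃ q ∈ N, w = q ⊗ₜ[K] b} ∪ {w | ∃ q ∈ N, w = a ⊗ₜ[K] q})) :
    ∃ q ∈ N, ∃ r ∈ N, z = q ⊗ₜ[K] b + a ⊗ₜ[K] r := by
  have hleft : {w | ∃ q ∈ N, w = q ⊗ₜ[K] b} = N.map ((TensorProduct.mk K M M).flip b) := by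
    ext; simp [eq_comm]
  have hright : {w | ∃ q ∈ N, w = a ⊗ₜ[K] q} = N.map (TensorProduct.mk K M M a) := by
    ext; simp [eq_comm]
  rw [hleft, hright, Submodule.span_union, Submodule.span_eq, Submodule.span_eq, Submodule.mem_sup] at h
  obtain ⟨_, ⟨q, hq, rfl⟩, _, ⟨r, hr, rfl⟩, rfl⟩ := h
  exact ⟨q, hq, r, hr, rfl⟩

/-- Here the symmetric algebra of a vector space `V` (with basis indexed by `σ`) is modelled by
the polynomial algebra, with `Symⁿ V` the homogeneous component of degree `n`; the reduced part of
`Δ p` vanishes iff `Δ p` lies in `Symⁿ V ⊗ Sym⁰ V + Sym⁰ V ⊗ Symⁿ V`. -/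
theorem stmt_3 (K : Type*) [Field K] [CharZero K] (σ : Type*) (n : ℕ) (hn : 1 < n)
    (p : MvPolynomial σ K) (hp : p ∈ MvPolynomial.homogeneousSubmodule σ K n)
    (h : symComul K σ p ∈ Submodule.span K
        ({z | ∃ q ∈ MvPolynomial.homogeneousSubmodule σ K n, z = q ⊗ₜ[K] 1} ∪
         {z | ∃ q ∈ MvPolynomial.homogeneousSubmodule σ K n, z = 1 ⊗ₜ[K] q})) :
    p = 0 := by
  obtain ⟨q, hq, r, -, hΔ⟩ := TensorProduct.exists_eq_tmul_add_tmul_of_mem_span h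
  rw [MvPolynomial.mem_homogeneousSubmodule] at hp hq
  refine eq_zero_of_forall_add_one_pow_smul_eq (K := K) hn (y := q) (z := r) fun c => ?_
  let μ := Algebra.TensorProduct.productMap (MvPolynomial.aeval (c • MvPolynomial.X))
    (AlgHom.id K (MvPolynomial σ K))
  have hμΔ : μ.comp (symComul K σ) = MvPolynomial.aeval ((c + 1) • MvPolynomial.X) := by
    rw [productMap_comp_symComul]
    congr 1
    ext i
    simp [add_smul]
  calc (c + 1) ^ n • p = μ (symComul K σ p) := by
        rw [← AlgHom.comp_apply, hμΔ, hp.aeval_smul, MvPolynomial.aeval_X_left_apply]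
    _ = c ^ n • q + r := by
        rw [hΔ, map_add, Algebra.TensorProduct.productMap_apply_tmul,
          Algebra.TensorProduct.productMap_apply_tmul, map_one, map_one, mul_one, one_mul,
          hq.aeval_smul, MvPolynomial.aeval_X_left_apply, AlgHom.id_apply]
end

section
/- Let (H, ⟨·,·⟩) be a symplectic vector space over ℚ. On the space of cyclic words |T(H)| (the quotient of the tensor algebra T(H) by the span of all commutators uv − vu), define a bracket on generators by {|x₁⋯x_n|, |y₁⋯y_m|} = Σ_{j=1}^n Σ_{k=1}^m ⟨x_j, y_k⟩ |x_{j+1}⋯x_n x₁⋯x_{j−1} y_{k+1}⋯y_m y₁⋯y_{k−1}|, where all x_j, y_k ∈ H. This bracket is well defined and antisymmetric. -/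
/-!
The cyclic derivative `D (x₀ ⋯ x_{n-1}) = ∑ⱼ xⱼ ⊗ x_{j+1} ⋯ x_{j-1}` is a linear map
`T(H) → H ⊗ T(H)` that is unchanged by rotating a word. Since `x w` is a rotation of `w x`, an
induction over `T(H)` gives `D (u v) = D (v u)`, so `D` factors through `|T(H)|`. The bracket is
`{a, b} = ∑ ω(x, y) |u v|` where `D a = ∑ x ⊗ u` and `D b = ∑ y ⊗ v`; exchanging `a` and `b`
replaces `ω(x, y)` by `ω(y, x) = -ω(x, y)` and `|u v|` by `|v u| = |u v|`.
-/

/-- The word `x₀ x₁ ⋯ x_{n-1}` in the tensor algebra `T(H)`. -/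
noncomputable def taWord {H : Type*} [AddCommGroup H] [Module ℚ H]
    (x : ℕ → H) (n : ℕ) : TensorAlgebra ℚ H :=
  ((List.range n).map fun i => TensorAlgebra.ι ℚ (x i)).prod

/-- The subspace of `T(H)` spanned by all commutators `uv − vu`; the cyclic quotient
`|T(H)|` is `T(H)` modulo this subspace. -/
noncomputable def commutatorSpan (H : Type*) [AddCommGroup H] [Module ℚ H] :
    Submodule ℚ (TensorAlgebra ℚ H) :=
  Submodule.span ℚ {z | ∃ u v : TensorAlgebra ℚ H, z = u * v - v * u}

open TensorProduct

namespace TensorAlgebra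

variable {R M : Type*} [CommSemiring R] [AddCommMonoid M] [Module R M]

theorem linearMap_ext_tprod {N : Type*} [AddCommMonoid N] [Module R N]
    {f g : TensorAlgebra R M →ₗ[R] N}
    (h : ∀ n (v : Fin n → M), f (tprod R M n v) = g (tprod R M n v)) : f = g := by
  have hsum : f ∘ₗ ofDirectSum.toLinearMap = g ∘ₗ ofDirectSum.toLinearMap :=
    DirectSum.linearMap_ext R fun n => PiTensorProduct.ext <| MultilinearMap.ext fun v => by
      simpa only [LinearMap.compMultilinearMap_apply, LinearMap.comp_apply,
        AlgHom.toLinearMap_apply, DirectSum.lof_eq_of, ofDirectSum_of_tprod] using h n v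
  ext a
  rw [← ofDirectSum_toDirectSum a]
  exact LinearMap.congr_fun hsum _

theorem ι_mul_tprod (x : M) {n : ℕ} (v : Fin n → M) :
    ι R x * tprod R M n v = tprod R M (n + 1) (Fin.cons x v) := by
  simp [tprod_apply, List.ofFn_succ]

theorem tprod_mul_ι {n : ℕ} (v : Fin n → M) (x : M) :
    tprod R M n v * ι R x = tprod R M (n + 1) (Fin.snoc v x) := by
  rw [tprod_apply, tprod_apply, List.ofFn_succ', List.prod_concat]
  simp

variable (R M) in
noncomputable def headTensorTail (m : ℕ) :
    MultilinearMap R (fun _ : Fin (m + 1) => M) (M ⊗[R] TensorAlgebra R M) :=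
  LinearMap.uncurryLeft
    { toFun := fun x => (TensorProduct.mk R M _ x).compMultilinearMap (tprod R M m)
      map_add' := fun x y => by ext; simp
      map_smul' := fun c x => by ext; simp [smul_tmul'] }

theorem headTensorTail_apply {m : ℕ} (v : Fin (m + 1) → M) :
    headTensorTail R M m v = v 0 ⊗ₜ tprod R M m (Fin.tail v) := rfl

variable (R M) in
noncomputable def cyclicDerivMultilinear :
    (n : ℕ) → MultilinearMap R (fun _ : Fin n => M) (M ⊗[R] TensorAlgebra R M)
  | 0 => 0
  | m + 1 => ∑ j, (headTensorTail R M m).domDomCongr (Equiv.addLeft j)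

noncomputable def cyclicDeriv : TensorAlgebra R M →ₗ[R] M ⊗[R] TensorAlgebra R M :=
  DirectSum.toModule R ℕ _ (fun n => PiTensorProduct.lift (cyclicDerivMultilinear R M n)) ∘ₗ
    toDirectSum.toLinearMap

theorem cyclicDeriv_tprod {n : ℕ} (v : Fin n → M) :
    cyclicDeriv (tprod R M n v) = cyclicDerivMultilinear R M n v := by
  rw [cyclicDeriv, LinearMap.comp_apply, AlgHom.toLinearMap_apply, toDirectSum_tensorPower_tprod,
    ← DirectSum.lof_eq_of R, DirectSum.toModule_lof, PiTensorProduct.lift.tprod]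

theorem cyclicDeriv_tprod_succ {m : ℕ} (v : Fin (m + 1) → M) :
    cyclicDeriv (tprod R M (m + 1) v) = ∑ j, v j ⊗ₜ tprod R M m (fun i => v (j + i.succ)) := by
  rw [cyclicDeriv_tprod, cyclicDerivMultilinear, sum_apply]
  simp only [MultilinearMap.domDomCongr_apply, headTensorTail_apply, Equiv.coe_addLeft, add_zero]
  rfl

theorem cyclicDeriv_tprod_comp_add {m : ℕ} (v : Fin (m + 1) → M) (k : Fin (m + 1)) :
    cyclicDeriv (tprod R M (m + 1) fun i => v (i + k)) = cyclicDeriv (tprod R M (m + 1) v) := by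
  simp only [cyclicDeriv_tprod_succ]
  refine Fintype.sum_equiv (Equiv.addRight k) _ _ fun j => ?_
  simp only [Equiv.coe_addRight, add_right_comm j _ k]

theorem cyclicDeriv_ι_mul_comm (x : M) (a : TensorAlgebra R M) :
    cyclicDeriv (ι R x * a) = cyclicDeriv (a * ι R x) := by
  suffices cyclicDeriv ∘ₗ LinearMap.mulLeft R (ι R x) =
      cyclicDeriv ∘ₗ LinearMap.mulRight R (ι R x) from LinearMap.congr_fun this a
  refine linearMap_ext_tprod fun n v => ?_
  simp only [LinearMap.comp_apply, LinearMap.mulLeft_apply, LinearMap.mulRight_apply,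
    ι_mul_tprod, tprod_mul_ι, Fin.snoc_eq_cons_rotate, finRotate_apply]
  exact (cyclicDeriv_tprod_comp_add _ 1).symm

theorem cyclicDeriv_mul_comm (a b : TensorAlgebra R M) :
    cyclicDeriv (a * b) = cyclicDeriv (b * a) := by
  induction a using TensorAlgebra.induction generalizing b with
  | algebraMap r => rw [Algebra.commutes]
  | ι x => exact cyclicDeriv_ι_mul_comm x b
  | mul a₁ a₂ h₁ h₂ => rw [mul_assoc, h₁, mul_assoc, h₂, mul_assoc]
  | add a₁ a₂ h₁ h₂ => rw [add_mul, mul_add, map_add, map_add, h₁, h₂]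

end TensorAlgebra

section MulPairing

variable {R M A N : Type*} [CommSemiring R] [AddCommMonoid M] [Module R M] [Semiring A]
  [Algebra R A] [AddCommMonoid N] [Module R N]

noncomputable def mulPairing (ω : M →ₗ[R] M →ₗ[R] R) (q : A →ₗ[R] N) :
    M ⊗[R] A →ₗ[R] M ⊗[R] A →ₗ[R] N :=
  (TensorProduct.map₂ ω ((LinearMap.mul R A).compr₂ q)).compr₂ (TensorProduct.lid R N)

@[simp]
theorem mulPairing_tmul (ω : M →ₗ[R] M →ₗ[R] R) (q : A →ₗ[R] N) (x y : M) (a b : A) :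
    mulPairing ω q (x ⊗ₜ a) (y ⊗ₜ b) = ω x y • q (a * b) := by
  simp [mulPairing]

end MulPairing

theorem mulPairing_swap {R M A N : Type*} [CommRing R] [AddCommMonoid M] [Module R M]
    [Semiring A] [Algebra R A] [AddCommGroup N] [Module R N] {ω : M →ₗ[R] M →ₗ[R] R}
    (hω : ω.IsAlt) {q : A →ₗ[R] N} (hq : ∀ a b, q (a * b) = q (b * a)) (p p' : M ⊗[R] A) :
    mulPairing ω q p p' = -mulPairing ω q p' p := by
  suffices mulPairing ω q = -(mulPairing ω q).flip from LinearMap.congr_fun₂ this p p'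
  ext x a y b
  simp [hq a b, ← hω.neg x y]

open TensorAlgebra

section CyclicQuotient

variable {H : Type*} [AddCommGroup H] [Module ℚ H]

theorem taWord_eq_tprod (x : ℕ → H) (n : ℕ) : taWord x n = tprod ℚ H n fun i => x i := by
  rw [taWord, TensorAlgebra.tprod_apply, List.ofFn_eq_map, ← List.map_coe_finRange_eq_range,
    List.map_map]
  rfl

theorem cyclicDeriv_taWord (x : ℕ → H) (n : ℕ) :
    cyclicDeriv (taWord x n) =
      ∑ j ∈ Finset.range n, x j ⊗ₜ[ℚ] taWord (fun i => x ((j + 1 + i) % n)) (n - 1) := by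
  rw [taWord_eq_tprod]
  cases n with
  | zero => rw [cyclicDeriv_tprod]; rfl
  | succ m =>
    rw [cyclicDeriv_tprod_succ, ← Fin.sum_univ_eq_sum_range]
    refine Fintype.sum_congr _ _ fun j => ?_
    rw [taWord_eq_tprod, Nat.add_sub_cancel]
    congr
    ext i
    rw [Fin.val_add, Fin.val_succ, add_assoc, add_comm 1]

theorem commutatorSpan_mkQ_mul_comm (a b : TensorAlgebra ℚ H) :
    (commutatorSpan H).mkQ (a * b) = (commutatorSpan H).mkQ (b * a) := by
  rw [← sub_eq_zero, ← map_sub, Submodule.mkQ_apply, Submodule.Quotient.mk_eq_zero]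
  exact Submodule.subset_span ⟨a, b, rfl⟩

theorem commutatorSpan_le_ker_cyclicDeriv :
    commutatorSpan H ≤ LinearMap.ker (cyclicDeriv (R := ℚ) (M := H)) :=
  Submodule.span_le.mpr <| by
    rintro _ ⟨a, b, rfl⟩
    rw [SetLike.mem_coe, LinearMap.mem_ker, map_sub, cyclicDeriv_mul_comm, sub_self]

noncomputable def necklaceBracket (ω : H →ₗ[ℚ] H →ₗ[ℚ] ℚ) :
    (TensorAlgebra ℚ H ⧸ commutatorSpan H) →ₗ[ℚ] (TensorAlgebra ℚ H ⧸ commutatorSpan H) →ₗ[ℚ]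
      (TensorAlgebra ℚ H ⧸ commutatorSpan H) :=
  let D := (commutatorSpan H).liftQ cyclicDeriv commutatorSpan_le_ker_cyclicDeriv
  (mulPairing ω (commutatorSpan H).mkQ).compl₁₂ D D

theorem necklaceBracket_mkQ (ω : H →ₗ[ℚ] H →ₗ[ℚ] ℚ) (a b : TensorAlgebra ℚ H) :
    necklaceBracket ω ((commutatorSpan H).mkQ a) ((commutatorSpan H).mkQ b) =
      mulPairing ω (commutatorSpan H).mkQ (cyclicDeriv a) (cyclicDeriv b) :=
  rfl

theorem necklaceBracket_swap {ω : H →ₗ[ℚ] H →ₗ[ℚ] ℚ} (hω : ω.IsAlt)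
    (u v : TensorAlgebra ℚ H ⧸ commutatorSpan H) :
    necklaceBracket ω u v = -necklaceBracket ω v u :=
  mulPairing_swap hω commutatorSpan_mkQ_mul_comm _ _

end CyclicQuotient

theorem stmt_12_general (H : Type*) [AddCommGroup H] [Module ℚ H]
    (ω : H →ₗ[ℚ] H →ₗ[ℚ] ℚ) (halt : ∀ x, ω x x = 0) :
    ∃ br : (TensorAlgebra ℚ H ⧸ commutatorSpan H) →ₗ[ℚ]
        (TensorAlgebra ℚ H ⧸ commutatorSpan H) →ₗ[ℚ]
        (TensorAlgebra ℚ H ⧸ commutatorSpan H),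
      (∀ (n m : ℕ) (x y : ℕ → H),
        br ((commutatorSpan H).mkQ (taWord x n)) ((commutatorSpan H).mkQ (taWord y m))
          = ∑ j ∈ Finset.range n, ∑ k ∈ Finset.range m,
              ω (x j) (y k) •
                (commutatorSpan H).mkQ
                  (taWord (fun i => x ((j + 1 + i) % n)) (n - 1) *
                    taWord (fun i => y ((k + 1 + i) % m)) (m - 1)))
      ∧ (∀ u v, br u v = - br v u) := by
  refine ⟨necklaceBracket ω, fun n m x y => ?_, necklaceBracket_swap halt⟩
  simp only [necklaceBracket_mkQ, cyclicDeriv_taWord, map_sum, LinearMap.sum_apply,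
    mulPairing_tmul]
  exact Finset.sum_comm

/-- Let `(H, ω)` be a symplectic vector space over `ℚ`.  On the space of cyclic words
`|T(H)|`, the bracket defined on generators by
`{|x₁⋯x_n|, |y₁⋯y_m|} = Σ_{j,k} ω(x_j, y_k) |x_{j+1}⋯x_{j−1} y_{k+1}⋯y_{k−1}|`
(indices read cyclically) is well defined and antisymmetric: i.e. there is a bilinear map
on `|T(H)|` satisfying this formula on all cyclic words, and it is antisymmetric. -/
theorem stmt_12 (H : Type*) [AddCommGroup H] [Module ℚ H]
    (ω : H →ₗ[ℚ] H →ₗ[ℚ] ℚ) (halt : ∀ x, ω x x = 0)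
    (hnd : ∀ x, (∀ y, ω x y = 0) → x = 0) :
    ∃ br : (TensorAlgebra ℚ H ⧸ commutatorSpan H) →ₗ[ℚ]
        (TensorAlgebra ℚ H ⧸ commutatorSpan H) →ₗ[ℚ]
        (TensorAlgebra ℚ H ⧸ commutatorSpan H),
      (∀ (n m : ℕ) (x y : ℕ → H),
        br ((commutatorSpan H).mkQ (taWord x n)) ((commutatorSpan H).mkQ (taWord y m))
          = ∑ j ∈ Finset.range n, ∑ k ∈ Finset.range m,
              ω (x j) (y k) •
                (commutatorSpan H).mkQ
                  (taWord (fun i => x ((j + 1 + i) % n)) (n - 1) *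
                    taWord (fun i => y ((k + 1 + i) % m)) (m - 1)))
      ∧ (∀ u v, br u v = - br v u) :=
  stmt_12_general H ω halt
end

section
/- Let (H, ⟨·,·⟩) be a symplectic vector space over ℚ. For each cyclic word |x₁⋯x_n| in |T(H)| define a linear endomorphism κ(|x₁⋯x_n|) of the tensor algebra T(H) by κ(|x₁⋯x_n|)(y₁⋯y_m) = Σ_{j=1}^n Σ_{k=1}^m ⟨x_j, y_k⟩ y₁⋯y_{k−1} x_{j+1}⋯x_n x₁⋯x_{j−1} y_{k+1}⋯y_m. Then κ(|x₁⋯x_n|) is a well-defined derivation of the associative algebra T(H). -/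
/-!
κ(|x₁⋯xₙ|) is the derivation of `T(H)` extending `y ↦ σ(x₁⋯xₙ)(y)`, where
`σ(x₁⋯xₙ)(y) = Σⱼ ω(xⱼ, y) xⱼ₊₁⋯xₙx₁⋯xⱼ₋₁`. This `σ` is the double derivation
`T(H) → T(H) ⊗ T(H)`, `x ↦ ω(x, y) 1 ⊗ 1`, followed by `a ⊗ b ↦ ba`; the Leibniz rule for the
double derivation gives `σ(uv) = σ(vu)`, so `σ` factors through `|T(H)|`.

Derivations out of `T(H)`, also those twisted by algebra maps `α, β`, exist with arbitrary
prescribed values on `H`: `u ↦ !![α u, D u; 0, β u]` is an algebra map into upper triangular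
matrices, given by the universal property of `T(H)`.
-/

namespace TensorAlgebra

variable {R M B : Type*} [CommSemiring R] [AddCommMonoid M] [Module R M] [Ring B] [Algebra R B]

noncomputable def triangularLift (α β : TensorAlgebra R M →ₐ[R] B) (d : M →ₗ[R] B) :
    TensorAlgebra R M →ₐ[R] Matrix (Fin 2) (Fin 2) B :=
  lift R
    { toFun := fun x => !![α (ι R x), d x; 0, β (ι R x)]
      map_add' := fun x y => by ext i j; fin_cases i <;> fin_cases j <;> simp
      map_smul' := fun r x => by ext i j; fin_cases i <;> fin_cases j <;> simp }

theorem triangularLift_eq (α β : TensorAlgebra R M →ₐ[R] B) (d : M →ₗ[R] B)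
    (u : TensorAlgebra R M) :
    triangularLift α β d u = !![α u, triangularLift α β d u 0 1; 0, β u] := by
  induction u using TensorAlgebra.induction with
  | algebraMap r =>
    ext i j; fin_cases i <;> fin_cases j <;> simp [Matrix.algebraMap_matrix_apply]
  | ι x => ext i j; fin_cases i <;> fin_cases j <;> simp [triangularLift]
  | mul a b ha hb =>
    rw [map_mul, ha, hb]
    ext i j; fin_cases i <;> fin_cases j <;> simp
  | add a b ha hb =>
    rw [map_add, ha, hb]
    ext i j; fin_cases i <;> fin_cases j <;> simp

noncomputable def twistedDeriv (α β : TensorAlgebra R M →ₐ[R] B) (d : M →ₗ[R] B) :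
    TensorAlgebra R M →ₗ[R] B :=
  Matrix.entryLinearMap R B 0 1 ∘ₗ (triangularLift α β d).toLinearMap

variable (α β : TensorAlgebra R M →ₐ[R] B) (d : M →ₗ[R] B)

@[simp]
theorem twistedDeriv_ι (x : M) : twistedDeriv α β d (ι R x) = d x := by
  simp [twistedDeriv, triangularLift]

theorem twistedDeriv_mul (u v : TensorAlgebra R M) :
    twistedDeriv α β d (u * v) = α u * twistedDeriv α β d v + twistedDeriv α β d u * β v := by
  change triangularLift α β d (u * v) 0 1 = _
  rw [map_mul, triangularLift_eq α β d u, triangularLift_eq α β d v]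
  simp [twistedDeriv]

@[simp]
theorem twistedDeriv_one : twistedDeriv α β d 1 = 0 := by
  simp [twistedDeriv]

theorem eq_twistedDeriv {D : TensorAlgebra R M →ₗ[R] B}
    (hD : ∀ u v, D (u * v) = α u * D v + D u * β v) (hι : ∀ x, D (ι R x) = d x) :
    D = twistedDeriv α β d := by
  have hD1 : D 1 = 0 := by simpa using hD 1 1
  ext u
  induction u using TensorAlgebra.induction with
  | algebraMap r => simp [Algebra.algebraMap_eq_smul_one, hD1]
  | ι x => simp [hι]
  | mul a b ha hb => rw [hD, twistedDeriv_mul, ha, hb]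
  | add a b ha hb => rw [map_add, map_add, ha, hb]

noncomputable def twistedDerivₗ : (M →ₗ[R] B) →ₗ[R] TensorAlgebra R M →ₗ[R] B where
  toFun := twistedDeriv α β
  map_add' d d' := .symm <| eq_twistedDeriv α β (d + d')
    (fun u v => by simp only [LinearMap.add_apply, twistedDeriv_mul]; noncomm_ring) (by simp)
  map_smul' r d := .symm <| eq_twistedDeriv α β (r • d)
    (fun u v => by simp only [LinearMap.smul_apply, twistedDeriv_mul, smul_add, mul_smul_comm,
      smul_mul_assoc]) (by simp)

@[simp]
theorem twistedDerivₗ_apply : twistedDerivₗ α β d = twistedDeriv α β d := rfl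

end TensorAlgebra

open TensorAlgebra TensorProduct Algebra.TensorProduct

section SwapMul

variable {R A : Type*} [CommSemiring R] [Semiring A] [Algebra R A]

noncomputable def swapMul : A ⊗[R] A →ₗ[R] A :=
  LinearMap.mul' R A ∘ₗ (TensorProduct.comm R A A).toLinearMap

@[simp]
theorem swapMul_tmul (a b : A) : swapMul (a ⊗ₜ[R] b) = b * a := by
  simp [swapMul]

theorem swapMul_tmul_one_mul (u : A) (e : A ⊗[R] A) :
    swapMul ((u ⊗ₜ[R] 1) * e) = swapMul (e * (1 ⊗ₜ[R] u)) := by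
  induction e with
  | zero => simp
  | tmul p q => simp [mul_assoc]
  | add e₁ e₂ h₁ h₂ => rw [mul_add, add_mul, map_add, map_add, h₁, h₂]

end SwapMul

section CyclicContraction

variable {R M : Type*} [CommRing R] [AddCommMonoid M] [Module R M] (ω : M →ₗ[R] M →ₗ[R] R)

noncomputable def doubleContraction :
    M →ₗ[R] TensorAlgebra R M →ₗ[R] TensorAlgebra R M ⊗[R] TensorAlgebra R M :=
  twistedDerivₗ includeLeft includeRight ∘ₗ ω.flip.compr₂ (LinearMap.toSpanSingleton R _ 1)

theorem doubleContraction_apply (y : M) :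
    doubleContraction ω y = twistedDeriv includeLeft includeRight
      (ω.flip.compr₂ (LinearMap.toSpanSingleton R _ 1) y) := rfl

noncomputable def cyclicContraction : TensorAlgebra R M →ₗ[R] M →ₗ[R] TensorAlgebra R M :=
  (doubleContraction ω).flip.compr₂ swapMul

theorem cyclicContraction_apply (w : TensorAlgebra R M) (y : M) :
    cyclicContraction ω w y = swapMul (doubleContraction ω y w) := rfl

theorem cyclicContraction_mul_comm (u v : TensorAlgebra R M) :
    cyclicContraction ω (u * v) = cyclicContraction ω (v * u) := by
  ext y
  simp only [cyclicContraction_apply, doubleContraction_apply, twistedDeriv_mul, includeLeft_apply,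
    includeRight_apply, map_add, swapMul_tmul_one_mul]
  exact add_comm _ _

end CyclicContraction

section Words

variable {H : Type*} [AddCommGroup H] [Module ℚ H]

@[simp]
theorem taWord_zero (x : ℕ → H) : taWord x 0 = 1 := by simp [taWord]

theorem taWord_succ (x : ℕ → H) (n : ℕ) : taWord x (n + 1) = taWord x n * ι ℚ (x n) := by
  simp [taWord, List.range_succ]

theorem taWord_congr {x y : ℕ → H} {n : ℕ} (h : ∀ i < n, x i = y i) : taWord x n = taWord y n := by
  unfold taWord
  congr 1
  exact List.map_congr_left fun i hi => by rw [h i (List.mem_range.mp hi)]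

theorem taWord_add (x : ℕ → H) (a b : ℕ) :
    taWord x (a + b) = taWord x a * taWord (fun i => x (a + i)) b := by
  induction b with
  | zero => simp
  | succ b ih => rw [← Nat.add_assoc, taWord_succ, ih, taWord_succ, mul_assoc]

theorem taWord_tail_mul_ι (y : ℕ → H) {k m : ℕ} (hk : k < m) :
    taWord (fun i => y (k + 1 + i)) (m - 1 - k) * ι ℚ (y m)
      = taWord (fun i => y (k + 1 + i)) (m - k) := by
  obtain ⟨l, rfl⟩ := Nat.exists_eq_add_of_lt hk
  rw [show k + l + 1 - 1 - k = l by omega, show k + l + 1 - k = l + 1 by omega, taWord_succ,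
    show k + l + 1 = k + 1 + l by omega]

theorem taWord_tail_mul_taWord (x : ℕ → H) {n j : ℕ} (hj : j < n) :
    taWord (fun i => x (j + 1 + i)) (n - 1 - j) * taWord x j
      = taWord (fun i => x ((j + 1 + i) % n)) (n - 1) := by
  conv_rhs => rw [show n - 1 = (n - 1 - j) + j by omega, taWord_add]
  congr 1
  · exact taWord_congr fun i hi => by rw [Nat.mod_eq_of_lt (by omega)]
  · refine taWord_congr fun i hi => ?_
    rw [show j + 1 + (n - 1 - j + i) = n + i by omega, Nat.add_mod_left,
      Nat.mod_eq_of_lt (by omega)]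

theorem twistedDeriv_taWord {B : Type*} [Ring B] [Algebra ℚ B]
    (α β : TensorAlgebra ℚ H →ₐ[ℚ] B) (d : H →ₗ[ℚ] B) (y : ℕ → H) (m : ℕ) :
    twistedDeriv α β d (taWord y m) = ∑ k ∈ Finset.range m,
      α (taWord y k) * d (y k) * β (taWord (fun i => y (k + 1 + i)) (m - 1 - k)) := by
  induction m with
  | zero => simp
  | succ m ih =>
    rw [taWord_succ, twistedDeriv_mul, ih, twistedDeriv_ι, Finset.sum_range_succ, Finset.sum_mul,
      add_comm]
    congr 1
    · refine Finset.sum_congr rfl fun k hk => ?_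
      rw [mul_assoc _ (β _), ← map_mul, taWord_tail_mul_ι y (Finset.mem_range.mp hk),
        Nat.add_sub_cancel]
    · simp

end Words

section Kappa

variable {H : Type*} [AddCommGroup H] [Module ℚ H] (ω : H →ₗ[ℚ] H →ₗ[ℚ] ℚ)

theorem cyclicContraction_taWord (x : ℕ → H) (n : ℕ) (y : H) :
    cyclicContraction ω (taWord x n) y
      = ∑ j ∈ Finset.range n, ω (x j) y • taWord (fun i => x ((j + 1 + i) % n)) (n - 1) := by
  rw [cyclicContraction_apply, doubleContraction_apply, twistedDeriv_taWord, map_sum]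
  refine Finset.sum_congr rfl fun j hj => ?_
  simp [← taWord_tail_mul_taWord x (Finset.mem_range.mp hj)]

theorem commutatorSpan_le_ker_cyclicContraction :
    commutatorSpan H ≤ LinearMap.ker (cyclicContraction ω) := by
  rw [commutatorSpan, Submodule.span_le]
  rintro _ ⟨u, v, rfl⟩
  rw [SetLike.mem_coe, LinearMap.mem_ker, map_sub, cyclicContraction_mul_comm, sub_self]

noncomputable def kappa :
    (TensorAlgebra ℚ H ⧸ commutatorSpan H) →ₗ[ℚ] TensorAlgebra ℚ H →ₗ[ℚ] TensorAlgebra ℚ H :=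
  twistedDerivₗ (AlgHom.id ℚ _) (AlgHom.id ℚ _) ∘ₗ
    (commutatorSpan H).liftQ (cyclicContraction ω) (commutatorSpan_le_ker_cyclicContraction ω)

theorem kappa_mk_taWord (n m : ℕ) (x y : ℕ → H) :
    kappa ω ((commutatorSpan H).mkQ (taWord x n)) (taWord y m)
      = ∑ j ∈ Finset.range n, ∑ k ∈ Finset.range m,
          ω (x j) (y k) •
            (taWord y k * taWord (fun i => x ((j + 1 + i) % n)) (n - 1) *
              taWord (fun i => y (k + 1 + i)) (m - 1 - k)) := by
  simp only [kappa, LinearMap.comp_apply, Submodule.mkQ_apply, Submodule.liftQ_apply,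
    twistedDerivₗ_apply, twistedDeriv_taWord, cyclicContraction_taWord, AlgHom.coe_id, id_eq,
    Finset.mul_sum, Finset.sum_mul, mul_smul_comm, smul_mul_assoc]
  exact Finset.sum_comm

theorem kappa_mul (ξ : TensorAlgebra ℚ H ⧸ commutatorSpan H) (u v : TensorAlgebra ℚ H) :
    kappa ω ξ (u * v) = kappa ω ξ u * v + u * kappa ω ξ v := by
  simp only [kappa, LinearMap.comp_apply, twistedDerivₗ_apply, twistedDeriv_mul, AlgHom.coe_id,
    id_eq]
  exact add_comm _ _

end Kappa

theorem stmt_14_general (H : Type*) [AddCommGroup H] [Module ℚ H]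
    (ω : H →ₗ[ℚ] H →ₗ[ℚ] ℚ) :
    ∃ κ : (TensorAlgebra ℚ H ⧸ commutatorSpan H) →ₗ[ℚ]
        (TensorAlgebra ℚ H →ₗ[ℚ] TensorAlgebra ℚ H),
      (∀ (n m : ℕ) (x y : ℕ → H),
        κ ((commutatorSpan H).mkQ (taWord x n)) (taWord y m)
          = ∑ j ∈ Finset.range n, ∑ k ∈ Finset.range m,
              ω (x j) (y k) •
                (taWord y k * taWord (fun i => x ((j + 1 + i) % n)) (n - 1) *
                  taWord (fun i => y (k + 1 + i)) (m - 1 - k)))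
      ∧ (∀ ξ, ∀ u v : TensorAlgebra ℚ H, κ ξ (u * v) = κ ξ u * v + u * κ ξ v) :=
  ⟨kappa ω, kappa_mk_taWord ω, kappa_mul ω⟩

/-- Let `(H, ω)` be a symplectic vector space over `ℚ`.  For each cyclic word `|x₁⋯x_n|`
the endomorphism of `T(H)` given on words by
`κ(|x₁⋯x_n|)(y₁⋯y_m) = Σ_{j,k} ω(x_j,y_k) y₁⋯y_{k−1} x_{j+1}⋯x_{j−1} y_{k+1}⋯y_m`
is a well-defined derivation of the associative algebra `T(H)`: i.e. there is a linear map
`κ` on the cyclic quotient `|T(H)|`, valued in endomorphisms of `T(H)`, satisfying this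
formula, each of whose values is a derivation. -/
theorem stmt_14 (H : Type*) [AddCommGroup H] [Module ℚ H]
    (ω : H →ₗ[ℚ] H →ₗ[ℚ] ℚ) (halt : ∀ x, ω x x = 0)
    (hnd : ∀ x, (∀ y, ω x y = 0) → x = 0) :
    ∃ κ : (TensorAlgebra ℚ H ⧸ commutatorSpan H) →ₗ[ℚ]
        (TensorAlgebra ℚ H →ₗ[ℚ] TensorAlgebra ℚ H),
      (∀ (n m : ℕ) (x y : ℕ → H),
        κ ((commutatorSpan H).mkQ (taWord x n)) (taWord y m)
          = ∑ j ∈ Finset.range n, ∑ k ∈ Finset.range m,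
              ω (x j) (y k) •
                (taWord y k * taWord (fun i => x ((j + 1 + i) % n)) (n - 1) *
                  taWord (fun i => y (k + 1 + i)) (m - 1 - k)))
      ∧ (∀ ξ, ∀ u v : TensorAlgebra ℚ H, κ ξ (u * v) = κ ξ u * v + u * κ ξ v) :=
  stmt_14_general H ω
end
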